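/- For any n ≥ 2, m ≥ n + 2, and any ρ > 1/⌊(m−n+2)/2⌋, there is no picking sequence of length m whose induced mechanism for the ordinal model with n players and m items is both truthful and a ρ-approximation. -/

import Mathlib

open Finset

/-- The total value of a bundle `S` of items under the additive valuation given by `v`. -/
noncomputable def bundleVal {m : ℕ} (v : Fin m → ℝ) (S : Finset (Fin m)) : ℝ :=
  ∑ j ∈ S, v j

/-- The bundle of items received by player `i` under the allocation `alloc`,
where `alloc j` is the player that receives item `j`.  (Such functions are exactly the
partitions of the items into `n` possibly empty bundles.) -/
def bundleOf {n m : ℕ} (alloc : Fin m → Fin n) (i : Fin n) : Finset (Fin m) :=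
  Finset.univ.filter fun j => alloc j = i

/-- The `n`-maximin share of a player with additive valuation `v` over the item set `Fin m`:
the maximum over all partitions of the items into `n` bundles of the minimum bundle value. -/
noncomputable def mms {m : ℕ} (n : ℕ) (v : Fin m → ℝ) : ℝ :=
  ⨆ f : Fin m → Fin n, ⨅ i : Fin n, bundleVal v (bundleOf f i)

/-- Truthfulness of a mechanism in the cardinal model. -/
def CardTruthful {n m : ℕ} (A : (Fin n → Fin m → ℝ) → (Fin m → Fin n)) : Prop :=
  ∀ V : Fin n → Fin m → ℝ, (∀ i j, 0 ≤ V i j) →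
    ∀ (i : Fin n) (v' : Fin m → ℝ), (∀ j, 0 ≤ v' j) →
      bundleVal (V i) (bundleOf (A (Function.update V i v')) i) ≤
        bundleVal (V i) (bundleOf (A V) i)

/-- `ρ`-approximation of a mechanism in the cardinal model. -/
def CardApprox {n m : ℕ} (ρ : ℝ) (A : (Fin n → Fin m → ℝ) → (Fin m → Fin n)) : Prop :=
  ∀ V : Fin n → Fin m → ℝ, (∀ i j, 0 ≤ V i j) →
    ∀ i : Fin n, ρ * mms n (V i) ≤ bundleVal (V i) (bundleOf (A V) i)

/-- A ranking (strict total order on the items) is encoded as a permutation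
`σ : Fin m ≃ Fin m` sending positions to items, `σ 0` being the top item.
A valuation `v` is consistent with the ranking `σ` if the values are
non-increasing along the positions of the ranking. -/
def Consistent {m : ℕ} (v : Fin m → ℝ) (σ : Equiv.Perm (Fin m)) : Prop :=
  ∀ k l : Fin m, k ≤ l → v (σ l) ≤ v (σ k)

/-- Truthfulness of a mechanism in the ordinal model. -/
def OrdTruthful {n m : ℕ} (A : (Fin n → Equiv.Perm (Fin m)) → (Fin m → Fin n)) : Prop :=
  ∀ (R : Fin n → Equiv.Perm (Fin m)) (i : Fin n) (v : Fin m → ℝ),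
    (∀ j, 0 ≤ v j) → Consistent v (R i) →
      ∀ σ' : Equiv.Perm (Fin m),
        bundleVal v (bundleOf (A (Function.update R i σ')) i) ≤
          bundleVal v (bundleOf (A R) i)

/-- `ρ`-approximation of a mechanism in the ordinal model. -/
def OrdApprox {n m : ℕ} (ρ : ℝ) (A : (Fin n → Equiv.Perm (Fin m)) → (Fin m → Fin n)) : Prop :=
  ∀ V : Fin n → Fin m → ℝ, (∀ i j, 0 ≤ V i j) →
    ∀ R : Fin n → Equiv.Perm (Fin m), (∀ i, Consistent (V i) (R i)) →
      ∀ i : Fin n, ρ * mms n (V i) ≤ bundleVal (V i) (bundleOf (A R) i)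

/-- Truthfulness of a mechanism in the public rankings model with publicly known rankings `R`. -/
def PRTruthful {n m : ℕ} (R : Fin n → Equiv.Perm (Fin m))
    (A : (Fin n → Fin m → ℝ) → (Fin m → Fin n)) : Prop :=
  ∀ V : Fin n → Fin m → ℝ, (∀ i j, 0 ≤ V i j) → (∀ i, Consistent (V i) (R i)) →
    ∀ (i : Fin n) (v' : Fin m → ℝ), (∀ j, 0 ≤ v' j) → Consistent v' (R i) →
      bundleVal (V i) (bundleOf (A (Function.update V i v')) i) ≤
        bundleVal (V i) (bundleOf (A V) i)

/-- `ρ`-approximation in the public rankings model with publicly known rankings `R`. -/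
def PRApprox {n m : ℕ} (ρ : ℝ) (R : Fin n → Equiv.Perm (Fin m))
    (A : (Fin n → Fin m → ℝ) → (Fin m → Fin n)) : Prop :=
  ∀ V : Fin n → Fin m → ℝ, (∀ i j, 0 ≤ V i j) → (∀ i, Consistent (V i) (R i)) →
    ∀ i : Fin n, ρ * mms n (V i) ≤ bundleVal (V i) (bundleOf (A V) i)

/-- The highest-ranked item of the nonempty set `S` according to the ranking `σ`. -/
def bestItem {m : ℕ} (σ : Equiv.Perm (Fin m)) (S : Finset (Fin m)) (h : S.Nonempty) : Fin m :=
  σ ((S.image σ.symm).min' (h.image σ.symm))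

/-- The (possibly partial) allocation produced by running the picking sequence `seq` on the
remaining items `S`: at each turn the current player of the sequence takes the highest-ranked
remaining item according to her ranking. -/
def pickAllocList {n m : ℕ} (R : Fin n → Equiv.Perm (Fin m)) :
    List (Fin n) → Finset (Fin m) → Fin m → Option (Fin n)
  | [], _ => fun _ => none
  | p :: rest, S =>
    if h : S.Nonempty then
      Function.update (pickAllocList R rest (S.erase (bestItem (R p) S h)))
        (bestItem (R p) S h) (some p)
    else fun _ => none

/-- The mechanism for the ordinal model induced by the picking sequence `seq`. -/
def pickMech {n m : ℕ} (seq : List (Fin n)) (R : Fin n → Equiv.Perm (Fin m)) :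
    Fin m → Option (Fin n) :=
  pickAllocList R seq Finset.univ

/-- The bundle of player `i` in a possibly partial allocation. -/
def obundleOf {n m : ℕ} (alloc : Fin m → Option (Fin n)) (i : Fin n) : Finset (Fin m) :=
  Finset.univ.filter fun j => alloc j = some i

/-- Truthfulness in the ordinal model, for mechanisms producing possibly partial allocations. -/
def OrdTruthfulO {n m : ℕ} (A : (Fin n → Equiv.Perm (Fin m)) → (Fin m → Option (Fin n))) : Prop :=
  ∀ (R : Fin n → Equiv.Perm (Fin m)) (i : Fin n) (v : Fin m → ℝ),
    (∀ j, 0 ≤ v j) → Consistent v (R i) →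
      ∀ σ' : Equiv.Perm (Fin m),
        bundleVal v (obundleOf (A (Function.update R i σ')) i) ≤
          bundleVal v (obundleOf (A R) i)

/-- `ρ`-approximation in the ordinal model, for mechanisms producing possibly partial
allocations. -/
def OrdApproxO {n m : ℕ} (ρ : ℝ)
    (A : (Fin n → Equiv.Perm (Fin m)) → (Fin m → Option (Fin n))) : Prop :=
  ∀ V : Fin n → Fin m → ℝ, (∀ i j, 0 ≤ V i j) →
    ∀ R : Fin n → Equiv.Perm (Fin m), (∀ i, Consistent (V i) (R i)) →
      ∀ i : Fin n, ρ * mms n (V i) ≤ bundleVal (V i) (obundleOf (A R) i)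

/-- Truthfulness in the public rankings model, for mechanisms producing possibly partial
allocations. -/
def PRTruthfulO {n m : ℕ} (R : Fin n → Equiv.Perm (Fin m))
    (A : (Fin n → Fin m → ℝ) → (Fin m → Option (Fin n))) : Prop :=
  ∀ V : Fin n → Fin m → ℝ, (∀ i j, 0 ≤ V i j) → (∀ i, Consistent (V i) (R i)) →
    ∀ (i : Fin n) (v' : Fin m → ℝ), (∀ j, 0 ≤ v' j) → Consistent v' (R i) →
      bundleVal (V i) (obundleOf (A (Function.update V i v')) i) ≤
        bundleVal (V i) (obundleOf (A V) i)

/-- `ρ`-approximation in the public rankings model, for mechanisms producing possibly partial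
allocations. -/
def PRApproxO {n m : ℕ} (ρ : ℝ) (R : Fin n → Equiv.Perm (Fin m))
    (A : (Fin n → Fin m → ℝ) → (Fin m → Option (Fin n))) : Prop :=
  ∀ V : Fin n → Fin m → ℝ, (∀ i j, 0 ≤ V i j) → (∀ i, Consistent (V i) (R i)) →
    ∀ i : Fin n, ρ * mms n (V i) ≤ bundleVal (V i) (obundleOf (A V) i)

section Aux

open Finset

variable {n m : ℕ}

lemma card_filter_val (a b : ℕ) (hb : b ≤ m) :
    (Finset.univ.filter fun j : Fin m => a ≤ j.val ∧ j.val < b).card = b - a := by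
  rw [← Nat.card_Ico a b, ← Finset.card_image_of_injective _ Fin.val_injective]
  congr 1
  ext k
  simp only [Finset.mem_image, Finset.mem_filter, Finset.mem_univ, true_and, Finset.mem_Ico]
  constructor
  · rintro ⟨j, hj, rfl⟩; exact hj
  · rintro ⟨h1, h2⟩; exact ⟨⟨k, by omega⟩, ⟨h1, h2⟩, rfl⟩

lemma mms_ge (hn : 0 < n) (v : Fin m → ℝ) (f : Fin m → Fin n) (r : ℝ)
    (h : ∀ i, r ≤ bundleVal v (bundleOf f i)) : r ≤ mms n v := by
  haveI : Nonempty (Fin n) := ⟨⟨0, hn⟩⟩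
  have h1 : r ≤ ⨅ i, bundleVal v (bundleOf f i) := le_ciInf h
  unfold mms
  exact h1.trans (le_ciSup (Set.Finite.bddAbove
    (Set.finite_range (fun f : Fin m → Fin n => ⨅ i : Fin n, bundleVal v (bundleOf f i)))) f)

lemma bestItem_mem (σ : Equiv.Perm (Fin m)) (S : Finset (Fin m)) (h : S.Nonempty) :
    bestItem σ S h ∈ S := by
  unfold bestItem
  have hmem := Finset.min'_mem (S.image σ.symm) (h.image σ.symm)
  rw [Finset.mem_image] at hmem
  obtain ⟨a, haS, ha⟩ := hmem
  rw [← ha, Equiv.apply_symm_apply]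
  exact haS

lemma bestItem_le (σ : Equiv.Perm (Fin m)) (S : Finset (Fin m)) (h : S.Nonempty)
    {a : Fin m} (ha : a ∈ S) : σ.symm (bestItem σ S h) ≤ σ.symm a := by
  unfold bestItem
  rw [Equiv.symm_apply_apply]
  exact Finset.min'_le _ _ (Finset.mem_image_of_mem _ ha)

lemma bestItem_eq {σ : Equiv.Perm (Fin m)} {S : Finset (Fin m)} {h : S.Nonempty} {z : Fin m}
    (hz : z ∈ S) (hle : ∀ a ∈ S, σ.symm z ≤ σ.symm a) : bestItem σ S h = z := by
  unfold bestItem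
  have h1 : (S.image σ.symm).min' (h.image σ.symm) = σ.symm z := by
    refine le_antisymm (Finset.min'_le _ _ (Finset.mem_image_of_mem _ hz)) ?_
    refine Finset.le_min' _ _ _ ?_
    rintro y hy
    rw [Finset.mem_image] at hy
    obtain ⟨a, ha, rfl⟩ := hy
    exact hle a ha
  rw [h1, Equiv.apply_symm_apply]

/-- The ranking `1 > 2 > ... > m-1 > 0`. -/
def wPerm (m : ℕ) : Equiv.Perm (Fin m) where
  toFun k := if h : k.val + 1 < m then ⟨k.val + 1, h⟩ else ⟨0, by have := k.isLt; omega⟩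
  invFun k := if k.val = 0 then ⟨m - 1, by have := k.isLt; omega⟩
    else ⟨k.val - 1, by have := k.isLt; omega⟩
  left_inv := by
    intro k
    rcases k with ⟨k, hk⟩
    dsimp only
    by_cases h : k + 1 < m
    · rw [dif_pos h, if_neg (by simp : ¬ ((⟨k+1,h⟩ : Fin m).val = 0))]
      exact Fin.ext (by simp)
    · rw [dif_neg h, if_pos rfl]
      exact Fin.ext (by simp; omega)
  right_inv := by
    intro k
    rcases k with ⟨k, hk⟩
    dsimp only
    by_cases h : k = 0
    · subst h
      rw [if_pos rfl, dif_neg (by omega : ¬ (m - 1 + 1 < m))]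
    · rw [if_neg (by simpa using h), dif_pos (by simp; omega : (⟨k-1, by omega⟩ : Fin m).val + 1 < m)]
      exact Fin.ext (by simp; omega)

lemma wPerm_symm_val (k : Fin m) :
    ((wPerm m).symm k).val = if k.val = 0 then m - 1 else k.val - 1 := by
  show ((wPerm m).invFun k).val = _
  unfold wPerm
  dsimp only
  split_ifs <;> rfl

/-- The ranking `2 > 3 > ... > m-1 > 1 > 0`. -/
def oPerm (m : ℕ) : Equiv.Perm (Fin m) where
  toFun k := if h : k.val + 2 < m then ⟨k.val + 2, h⟩
    else if h1 : k.val + 2 = m then ⟨1, by omega⟩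
    else ⟨0, by have := k.isLt; omega⟩
  invFun k := if k.val = 0 then ⟨m - 1, by have := k.isLt; omega⟩
    else if k.val = 1 then ⟨m - 2, by have := k.isLt; omega⟩
    else ⟨k.val - 2, by have := k.isLt; omega⟩
  left_inv := by
    intro k
    rcases k with ⟨k, hk⟩
    dsimp only
    by_cases h : k + 2 < m
    · rw [dif_pos h, if_neg (by simp : ¬ ((⟨k+2,h⟩ : Fin m).val = 0)),
        if_neg (by simp : ¬ ((⟨k+2,h⟩ : Fin m).val = 1))]
      exact Fin.ext (by simp)
    · by_cases h1 : k + 2 = m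
      · rw [dif_neg h, dif_pos h1, if_neg (by simp : ¬ ((⟨1, by omega⟩ : Fin m).val = 0)),
          if_pos (by simp : ((⟨1, by omega⟩ : Fin m).val = 1))]
        exact Fin.ext (by simp; omega)
      · rw [dif_neg h, dif_neg h1, if_pos rfl]
        exact Fin.ext (by simp; omega)
  right_inv := by
    intro k
    rcases k with ⟨k, hk⟩
    dsimp only
    by_cases h : k = 0
    · subst h
      rw [if_pos rfl, dif_neg (by omega : ¬ (m - 1 + 2 < m)),
        dif_neg (by omega : ¬ (m - 1 + 2 = m))]
    · by_cases h1 : k = 1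
      · subst h1
        rw [if_neg h, if_pos rfl, dif_neg (by simp; omega : ¬ ((⟨m-2, by omega⟩ : Fin m).val + 2 < m)),
          dif_pos (by simp; omega : ((⟨m-2, by omega⟩ : Fin m).val + 2 = m))]
      · rw [if_neg h, if_neg h1, dif_pos (by simp; omega : (⟨k-2, by omega⟩ : Fin m).val + 2 < m)]
        exact Fin.ext (by simp; omega)

lemma oPerm_symm_val (k : Fin m) :
    ((oPerm m).symm k).val =
      if k.val = 0 then m - 1 else if k.val = 1 then m - 2 else k.val - 2 := by
  show ((oPerm m).invFun k).val = _
  unfold oPerm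
  dsimp only
  split_ifs <;> rfl

end Aux

section Aux2

open Finset

variable {n m : ℕ}

lemma best_id {T : Finset (Fin m)} {hT : T.Nonempty} {z0 : Fin m} (h0 : z0.val = 0)
    (hz : z0 ∈ T) : bestItem (1 : Equiv.Perm (Fin m)) T hT = z0 := by
  refine bestItem_eq hz ?_
  intro a ha
  show z0 ≤ a
  rw [Fin.le_def]
  omega

lemma best_w_top {T : Finset (Fin m)} {hT : T.Nonempty} {z1 : Fin m} (h1 : z1.val = 1)
    (hz : z1 ∈ T) : bestItem (wPerm m) T hT = z1 := by
  refine bestItem_eq hz ?_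
  intro a ha
  rw [Fin.le_def, wPerm_symm_val, h1]
  simp

lemma best_w_ne {T : Finset (Fin m)} {hT : T.Nonempty} {z0 z1 : Fin m} (h0 : z0.val = 0)
    (h1 : z1.val = 1) (hz0 : z0 ∈ T) (hz1 : z1 ∉ T) (hc : 2 ≤ T.card) :
    bestItem (wPerm m) T hT ≠ z0 := by
  obtain ⟨zg, hzgT, hzgne⟩ := Finset.exists_mem_ne (s := T) (by omega) z0
  have hzg1 : zg ≠ z1 := fun h => hz1 (h ▸ hzgT)
  have hzg2 : 2 ≤ zg.val := by
    rcases Nat.lt_or_ge zg.val 2 with h | h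
    · interval_cases hv : zg.val
      · exact absurd (Fin.ext (by omega : zg.val = z0.val)) hzgne
      · exact absurd (Fin.ext (by omega : zg.val = z1.val)) hzg1
    · exact h
  intro hEq
  have hle := bestItem_le (wPerm m) T hT hzgT
  rw [hEq, Fin.le_def, wPerm_symm_val, wPerm_symm_val, h0, if_pos rfl,
    if_neg (by omega : ¬ zg.val = 0)] at hle
  have := zg.isLt
  omega

lemma best_o_ne2 {T : Finset (Fin m)} {hT : T.Nonempty} {z0 z1 : Fin m} (h0 : z0.val = 0)
    (h1 : z1.val = 1) (hz0 : z0 ∈ T) (hz1 : z1 ∈ T) (hc : 2 < T.card) :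
    bestItem (oPerm m) T hT ∉ ({z0, z1} : Finset (Fin m)) := by
  have hns : ¬ T ⊆ {z0, z1} := by
    intro hsub
    have := Finset.card_le_card hsub
    have : ({z0, z1} : Finset (Fin m)).card ≤ 2 := Finset.card_insert_le _ _ |>.trans (by simp)
    omega
  obtain ⟨zg, hzgT, hzgn⟩ := Finset.not_subset.mp hns
  simp only [Finset.mem_insert, Finset.mem_singleton, not_or] at hzgn
  have hzg2 : 2 ≤ zg.val := by
    rcases Nat.lt_or_ge zg.val 2 with h | h
    · interval_cases hv : zg.val
      · exact absurd (Fin.ext (by omega : zg.val = z0.val)) hzgn.1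
      · exact absurd (Fin.ext (by omega : zg.val = z1.val)) hzgn.2
    · exact h
  have hle := bestItem_le (oPerm m) T hT hzgT
  have hzgval : ((oPerm m).symm zg).val = zg.val - 2 := by
    rw [oPerm_symm_val, if_neg (by omega), if_neg (by omega)]
  intro hmem
  have hlt := zg.isLt
  simp only [Finset.mem_insert, Finset.mem_singleton] at hmem
  rcases hmem with h | h
  · rw [h, Fin.le_def, hzgval, oPerm_symm_val, h0, if_pos rfl] at hle
    omega
  · rw [h, Fin.le_def, hzgval, oPerm_symm_val, h1, if_neg (by omega), if_pos rfl] at hle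
    omega

lemma best_o_ne1 {T : Finset (Fin m)} {hT : T.Nonempty} {z0 z1 : Fin m} (h0 : z0.val = 0)
    (h1 : z1.val = 1) (hz0 : z0 ∈ T) (hz1 : z1 ∉ T) (hc : 2 ≤ T.card) :
    bestItem (oPerm m) T hT ≠ z0 := by
  obtain ⟨zg, hzgT, hzgne⟩ := Finset.exists_mem_ne (s := T) (by omega) z0
  have hzg1 : zg ≠ z1 := fun h => hz1 (h ▸ hzgT)
  have hzg2 : 2 ≤ zg.val := by
    rcases Nat.lt_or_ge zg.val 2 with h | h
    · interval_cases hv : zg.val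
      · exact absurd (Fin.ext (by omega : zg.val = z0.val)) hzgne
      · exact absurd (Fin.ext (by omega : zg.val = z1.val)) hzg1
    · exact h
  intro hEq
  have hle := bestItem_le (oPerm m) T hT hzgT
  rw [hEq, Fin.le_def, oPerm_symm_val, oPerm_symm_val, h0, if_pos rfl,
    if_neg (by omega : ¬ zg.val = 0), if_neg (by omega : ¬ zg.val = 1)] at hle
  have := zg.isLt
  omega

lemma best_swap_top {T : Finset (Fin m)} {hT : T.Nonempty} {z0 z1 : Fin m} (h0 : z0.val = 0)
    (hz : z1 ∈ T) : bestItem (Equiv.swap z0 z1) T hT = z1 := by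
  refine bestItem_eq hz ?_
  intro a ha
  rw [Equiv.symm_swap, Equiv.swap_apply_right, Fin.le_def, h0]
  simp

lemma best_swap_second {T : Finset (Fin m)} {hT : T.Nonempty} {z0 z1 : Fin m} (h0 : z0.val = 0)
    (h1 : z1.val = 1) (hz0 : z0 ∈ T) (hz1 : z1 ∉ T) :
    bestItem (Equiv.swap z0 z1) T hT = z0 := by
  refine bestItem_eq hz0 ?_
  intro a ha
  rw [Equiv.symm_swap, Equiv.swap_apply_left]
  by_cases ha0 : a = z0
  · subst ha0
    rw [Equiv.swap_apply_left]
  · have ha1 : a ≠ z1 := fun h => hz1 (h ▸ ha)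
    rw [Equiv.swap_apply_of_ne_of_ne ha0 ha1, Fin.le_def, h1]
    have : a.val ≠ 0 := fun h => ha0 (Fin.ext (by omega : a.val = z0.val))
    omega

lemma pickAllocList_core (R : Fin n → Equiv.Perm (Fin m)) (P : Finset (Fin m)) :
    ∀ (L : List (Fin n)) (S : Finset (Fin m)) (L2 : List (Fin n)),
      P ⊆ S → L.length + P.card ≤ S.card →
      (∀ p ∈ L, ∀ T : Finset (Fin m), T ⊆ S → P ⊆ T → P.card < T.card →
        ∀ hT : T.Nonempty, bestItem (R p) T hT ∉ P) →
      ∃ S', S' ⊆ S ∧ P ⊆ S' ∧ S'.card + L.length = S.card ∧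
        ∀ x ∈ P, pickAllocList R (L ++ L2) S x = pickAllocList R L2 S' x := by
  intro L
  induction L with
  | nil =>
    intro S L2 hPS _ _
    exact ⟨S, subset_rfl, hPS, by simp, fun x _ => rfl⟩
  | cons p L ih =>
    intro S L2 hPS hcard hbest
    simp only [List.length_cons] at hcard
    have hPcard : P.card ≤ S.card := Finset.card_le_card hPS
    have hSne : S.Nonempty := Finset.card_pos.mp (by omega)
    have hb : bestItem (R p) S hSne ∉ P :=
      hbest p (List.mem_cons_self) S subset_rfl hPS (by omega) hSne
    set b := bestItem (R p) S hSne with hbdef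
    have hbS : b ∈ S := bestItem_mem _ _ _
    have hPS' : P ⊆ S.erase b := fun x hx =>
      Finset.mem_erase.mpr ⟨fun h => hb (h ▸ hx), hPS hx⟩
    have hcard' : L.length + P.card ≤ (S.erase b).card := by
      rw [Finset.card_erase_of_mem hbS]; omega
    have hbest' : ∀ q ∈ L, ∀ T : Finset (Fin m), T ⊆ S.erase b → P ⊆ T → P.card < T.card →
        ∀ hT : T.Nonempty, bestItem (R q) T hT ∉ P := fun q hq T hT h1 h2 h3 =>
      hbest q (List.mem_cons_of_mem p hq) T (hT.trans (Finset.erase_subset _ _)) h1 h2 h3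
    obtain ⟨S', h1, h2, h3, h4⟩ := ih (S.erase b) L2 hPS' hcard' hbest'
    rw [Finset.card_erase_of_mem hbS] at h3
    refine ⟨S', h1.trans (Finset.erase_subset _ _), h2, by simp; omega, ?_⟩
    intro x hx
    have hxb : x ≠ b := fun h => hb (h ▸ hx)
    show pickAllocList R (p :: (L ++ L2)) S x = _
    rw [pickAllocList, dif_pos hSne, Function.update_of_ne hxb]
    exact h4 x hx

lemma pickAllocList_one :
    ∀ (L : List (Fin n)) (S : Finset (Fin m)) (j : Fin m),
      pickAllocList (fun _ => (1 : Equiv.Perm (Fin m))) L S j =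
        if j ∈ S then L[(S.filter fun y => y < j).card]? else none := by
  intro L
  induction L with
  | nil =>
    intro S j
    rw [pickAllocList]
    split <;> simp
  | cons p L ih =>
    intro S j
    by_cases hS : S.Nonempty
    · rw [pickAllocList, dif_pos hS]
      have hb : bestItem (1 : Equiv.Perm (Fin m)) S hS = S.min' hS := by
        refine bestItem_eq (S.min'_mem hS) ?_
        intro a ha
        show S.min' hS ≤ a
        exact S.min'_le a ha
      rw [hb]
      by_cases hj : j = S.min' hS
      · subst hj
        rw [Function.update_self, if_pos (S.min'_mem hS)]
        have hf : S.filter (fun y => y < S.min' hS) = ∅ := by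
          refine Finset.filter_false_of_mem ?_
          intro y hy
          exact not_lt.mpr (S.min'_le y hy)
        rw [hf]
        simp
      · rw [Function.update_of_ne hj, ih]
        by_cases hjS : j ∈ S
        · have hjS' : j ∈ S.erase (S.min' hS) := Finset.mem_erase.mpr ⟨hj, hjS⟩
          rw [if_pos hjS', if_pos hjS]
          have hfe : (S.erase (S.min' hS)).filter (fun y => y < j) =
              (S.filter (fun y => y < j)).erase (S.min' hS) := by
            ext y
            simp only [Finset.mem_filter, Finset.mem_erase]
            tauto
          have hmin : S.min' hS ∈ S.filter (fun y => y < j) := by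
            rw [Finset.mem_filter]
            exact ⟨S.min'_mem hS, lt_of_le_of_ne (S.min'_le j hjS) (Ne.symm hj)⟩
          have hcpos : 0 < (S.filter (fun y => y < j)).card := Finset.card_pos.mpr ⟨_, hmin⟩
          rw [hfe, Finset.card_erase_of_mem hmin]
          obtain ⟨c, hc⟩ : ∃ c, (S.filter (fun y => y < j)).card = c + 1 :=
            ⟨_, (Nat.succ_pred_eq_of_pos hcpos).symm⟩
          rw [hc]
          simp
        · rw [if_neg (fun h => hjS (Finset.mem_of_mem_erase h)), if_neg hjS]
    · rw [pickAllocList, dif_neg hS]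
      rw [Finset.not_nonempty_iff_eq_empty] at hS
      subst hS
      simp

lemma pickMech_one (seq : List (Fin n)) (hlen : seq.length = m) (j : Fin m) :
    pickMech seq (fun _ => (1 : Equiv.Perm (Fin m))) j =
      some (seq[j.val]'(by omega)) := by
  show pickAllocList _ seq Finset.univ j = _
  rw [pickAllocList_one, if_pos (Finset.mem_univ j)]
  have hcard : (Finset.univ.filter fun y : Fin m => y < j).card = j.val := by
    have hcong : (Finset.univ.filter fun y : Fin m => y < j) =
        (Finset.univ.filter fun y : Fin m => 0 ≤ y.val ∧ y.val < j.val) := by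
      apply Finset.filter_congr
      intro x _
      rw [Fin.lt_def]
      exact ⟨fun h => ⟨Nat.zero_le _, h⟩, fun h => h.2⟩
    rw [hcong, card_filter_val 0 j.val (by omega : j.val ≤ m)]
    omega
  rw [hcard]
  exact List.getElem?_eq_getElem (by omega)

end Aux2

section Aux3

open Finset

/-- A valuation giving value `A` to the first `c` items and `B` to the rest. -/
noncomputable def stepVal (m c : ℕ) (A B : ℝ) : Fin m → ℝ := fun j => if j.val < c then A else B

lemma stepVal_nonneg (m c : ℕ) (A B : ℝ) (hA : 0 ≤ A) (hB : 0 ≤ B) :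
    ∀ j, 0 ≤ stepVal m c A B j := by
  intro j
  unfold stepVal
  split_ifs <;> assumption

lemma stepVal_consistent (m c : ℕ) (A B : ℝ) (h : B ≤ A) :
    Consistent (stepVal m c A B) 1 := by
  intro k l hkl
  show stepVal m c A B l ≤ stepVal m c A B k
  rw [Fin.le_def] at hkl
  unfold stepVal
  by_cases hl : l.val < c
  · rw [if_pos hl, if_pos (by omega)]
  · by_cases hk : k.val < c
    · rw [if_neg hl, if_pos hk]; exact h
    · rw [if_neg hl, if_neg hk]

lemma attack1 {n m : ℕ} (hn : 2 ≤ n) (hnm : n ≤ m) :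
    (1:ℝ) ≤ mms n (stepVal m n 1 0) := by
  apply mms_ge (by omega : 0 < n) _
    (fun j : Fin m => if h : j.val < n then (⟨j.val, h⟩ : Fin n) else ⟨0, by omega⟩)
  intro t
  have htm : t.val < m := lt_of_lt_of_le t.isLt hnm
  have hmem : (⟨t.val, htm⟩ : Fin m) ∈ bundleOf
      (fun j : Fin m => if h : j.val < n then (⟨j.val, h⟩ : Fin n) else ⟨0, by omega⟩) t := by
    simp only [bundleOf, Finset.mem_filter, Finset.mem_univ, true_and]
    rw [dif_pos (t.isLt : (⟨t.val, htm⟩ : Fin m).val < n)]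
  have h1 : stepVal m n 1 0 ⟨t.val, htm⟩ = 1 := by
    show (if t.val < n then (1:ℝ) else 0) = 1
    rw [if_pos t.isLt]
  calc (1:ℝ) = stepVal m n 1 0 ⟨t.val, htm⟩ := h1.symm
    _ ≤ bundleVal (stepVal m n 1 0) (bundleOf _ t) :=
        Finset.single_le_sum (fun j _ => stepVal_nonneg m n 1 0 one_pos.le le_rfl j) hmem

lemma attack2 {n m : ℕ} (hn : 2 ≤ n) (hm : n + 2 ≤ m) :
    ((((m - n + 2) / 2 : ℕ)) : ℝ) ≤ mms n (stepVal m (n-2) (m:ℝ) 1) := by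
  have hd2 : 2 ≤ (m - n + 2) / 2 := by omega
  have hdm : (m - n + 2) / 2 + (n - 2) ≤ m := by omega
  set d : ℕ := (m - n + 2) / 2 with hddef
  apply mms_ge (by omega : 0 < n) _
    (fun j : Fin m => if h : j.val < n - 2 then (⟨j.val, by omega⟩ : Fin n)
      else if j.val < n - 2 + d then ⟨n-2, by omega⟩ else ⟨n-1, by omega⟩)
  intro t
  set f : Fin m → Fin n := fun j : Fin m => if h : j.val < n - 2 then (⟨j.val, by omega⟩ : Fin n)
      else if j.val < n - 2 + d then ⟨n-2, by omega⟩ else ⟨n-1, by omega⟩ with hfdef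
  have hnn := stepVal_nonneg m (n-2) (m:ℝ) 1 (by positivity) one_pos.le
  have hcase : t.val < n-2 ∨ t.val = n-2 ∨ t.val = n-1 := by have := t.isLt; omega
  rcases hcase with ht | ht | ht
  · have htm : t.val < m := by omega
    have hmem : (⟨t.val, htm⟩ : Fin m) ∈ bundleOf f t := by
      simp only [bundleOf, Finset.mem_filter, Finset.mem_univ, true_and, hfdef]
      rw [dif_pos (ht : (⟨t.val, htm⟩ : Fin m).val < n - 2)]
    have h1 : stepVal m (n-2) (m:ℝ) 1 ⟨t.val, htm⟩ = m := by
      show (if t.val < n - 2 then ((m:ℕ):ℝ) else 1) = m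
      rw [if_pos ht]
    calc ((d:ℕ):ℝ) ≤ ((m:ℕ):ℝ) := by exact_mod_cast (by omega : d ≤ m)
      _ = stepVal m (n-2) (m:ℝ) 1 ⟨t.val, htm⟩ := h1.symm
      _ ≤ bundleVal (stepVal m (n-2) (m:ℝ) 1) (bundleOf f t) :=
          Finset.single_le_sum (fun j _ => hnn j) hmem
  · have hbe : bundleOf f t =
        Finset.univ.filter (fun j : Fin m => n - 2 ≤ j.val ∧ j.val < n - 2 + d) := by
      ext j
      simp only [bundleOf, Finset.mem_filter, Finset.mem_univ, true_and, hfdef]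
      constructor
      · intro hj
        by_cases h1 : j.val < n - 2
        · rw [dif_pos h1] at hj
          have hval : j.val = t.val := by rw [← hj]
          omega
        · rw [dif_neg h1] at hj
          by_cases h2 : j.val < n - 2 + d
          · exact ⟨by omega, h2⟩
          · rw [if_neg h2] at hj
            have hval : n - 1 = t.val := by rw [← hj]
            omega
      · rintro ⟨h1, h2⟩
        rw [dif_neg (by omega), if_pos h2]
        exact Fin.ext (by show n - 2 = t.val; omega)
    rw [hbe]
    have hone : ∀ j ∈ Finset.univ.filter (fun j : Fin m => n - 2 ≤ j.val ∧ j.val < n - 2 + d),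
        stepVal m (n-2) (m:ℝ) 1 j = 1 := by
      intro j hj
      rw [Finset.mem_filter] at hj
      show (if j.val < n - 2 then ((m:ℕ):ℝ) else 1) = 1
      rw [if_neg (by omega)]
    show (∑ j ∈ _, stepVal m (n-2) (m:ℝ) 1 j) ≥ _
    rw [Finset.sum_congr rfl hone, Finset.sum_const,
      card_filter_val (n-2) (n-2+d) (by omega), nsmul_eq_mul, mul_one]
    exact_mod_cast (by omega : d ≤ n - 2 + d - (n - 2))
  · have hbe : bundleOf f t =
        Finset.univ.filter (fun j : Fin m => n - 2 + d ≤ j.val ∧ j.val < m) := by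
      ext j
      simp only [bundleOf, Finset.mem_filter, Finset.mem_univ, true_and, hfdef]
      constructor
      · intro hj
        by_cases h1 : j.val < n - 2
        · rw [dif_pos h1] at hj
          have hval : j.val = t.val := by rw [← hj]
          omega
        · rw [dif_neg h1] at hj
          by_cases h2 : j.val < n - 2 + d
          · rw [if_pos h2] at hj
            have hval : n - 2 = t.val := by rw [← hj]
            omega
          · exact ⟨by omega, j.isLt⟩
      · rintro ⟨h1, h2⟩
        rw [dif_neg (by omega), if_neg (by omega)]
        exact Fin.ext (by show n - 1 = t.val; omega)
    rw [hbe]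
    have hone : ∀ j ∈ Finset.univ.filter (fun j : Fin m => n - 2 + d ≤ j.val ∧ j.val < m),
        stepVal m (n-2) (m:ℝ) 1 j = 1 := by
      intro j hj
      rw [Finset.mem_filter] at hj
      show (if j.val < n - 2 then ((m:ℕ):ℝ) else 1) = 1
      rw [if_neg (by omega)]
    show (∑ j ∈ _, stepVal m (n-2) (m:ℝ) 1 j) ≥ _
    rw [Finset.sum_congr rfl hone, Finset.sum_const,
      card_filter_val (n-2+d) m le_rfl, nsmul_eq_mul, mul_one]
    exact_mod_cast (by omega : d ≤ m - (n - 2 + d))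

end Aux3

/-- For any `n ≥ 2`, `m ≥ n + 2` and any `ρ > 1/⌊(m-n+2)/2⌋`, there is no
picking sequence of length `m` whose induced mechanism for the ordinal model is both truthful
and a `ρ`-approximation. -/
theorem stmt7 (n m : ℕ) (hn : 2 ≤ n) (hm : n + 2 ≤ m) (ρ : ℝ)
    (hρ : (1 : ℝ) / (((m - n + 2) / 2 : ℕ) : ℝ) < ρ) :
    ¬ ∃ seq : List (Fin n), seq.length = m ∧
        OrdTruthfulO (pickMech (m := m) seq) ∧ OrdApproxO ρ (pickMech (m := m) seq) := by
  rintro ⟨seq, hlen, htru, happ⟩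
  have hm4 : 4 ≤ m := by omega
  set d : ℕ := (m - n + 2) / 2 with hddef
  have hd2 : 2 ≤ d := by omega
  have hdpos : (0:ℝ) < (d:ℝ) := by exact_mod_cast (by omega : 0 < d)
  have hρ0 : 0 < ρ := lt_trans (div_pos one_pos hdpos) hρ
  have hρd : 1 < ρ * (d:ℝ) := by
    rw [div_lt_iff₀ hdpos] at hρ
    linarith
  have hGlt : ∀ j : Fin m, j.val < seq.length := by
    intro j
    rw [hlen]; exact j.isLt
  obtain ⟨G, hG⟩ : ∃ G : Fin m → Fin n, ∀ j : Fin m, G j = seq[j.val]'(hGlt j) :=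
    ⟨_, fun _ => rfl⟩
  have hid : ∀ j : Fin m, pickMech seq (fun _ => (1 : Equiv.Perm (Fin m))) j = some (G j) := by
    intro j
    rw [pickMech_one seq hlen j, hG j]
  by_cases hc1 : ∃ i : Fin n, ∀ j : Fin m, G j = i → n ≤ j.val
  · -- Case 1: some player receives no item among the `n` most valuable ones
    obtain ⟨i, hi⟩ := hc1
    have h0 := happ (fun _ => stepVal m n 1 0)
      (fun _ => stepVal_nonneg m n 1 0 one_pos.le le_rfl)
      (fun _ => 1) (fun _ => stepVal_consistent m n 1 0 (by norm_num)) i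
    have hval : bundleVal (stepVal m n 1 0) (obundleOf (pickMech seq fun _ => 1) i) = 0 := by
      apply Finset.sum_eq_zero
      intro j hj
      simp only [obundleOf, Finset.mem_filter, Finset.mem_univ, true_and] at hj
      rw [hid j] at hj
      have hji : G j = i := Option.some_injective _ hj
      have := hi j hji
      show (if j.val < n then (1:ℝ) else 0) = 0
      rw [if_neg (by omega)]
    have hmms : (1:ℝ) ≤ mms n (stepVal m n 1 0) := attack1 hn (by omega)
    rw [hval] at h0
    nlinarith
  · push_neg at hc1
    have hinj : ∀ j1 j2 : Fin m, j1.val < n → j2.val < n → G j1 = G j2 → j1 = j2 := by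
      have hcardA : (Finset.univ.filter fun j : Fin m => 0 ≤ j.val ∧ j.val < n).card = n := by
        rw [card_filter_val 0 n (by omega)]; omega
      have himg : (Finset.univ.filter fun j : Fin m => 0 ≤ j.val ∧ j.val < n).image G
          = Finset.univ := by
        rw [Finset.eq_univ_iff_forall]
        intro i
        obtain ⟨j, hj1, hj2⟩ := hc1 i
        exact Finset.mem_image.mpr
          ⟨j, Finset.mem_filter.mpr ⟨Finset.mem_univ _, ⟨Nat.zero_le _, by omega⟩⟩, hj1⟩
      have hinjOn := Finset.injOn_of_card_image_eq
        (by rw [himg, hcardA, Finset.card_univ, Fintype.card_fin])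
      intro j1 j2 h1 h2 heq
      exact hinjOn
        (by simp only [Finset.coe_filter, Set.mem_setOf_eq, Finset.mem_univ, true_and]
            exact ⟨Nat.zero_le _, h1⟩)
        (by simp only [Finset.coe_filter, Set.mem_setOf_eq, Finset.mem_univ, true_and]
            exact ⟨Nat.zero_le _, h2⟩) heq
    have hn2m : n - 2 < m := by omega
    have hn1m : n - 1 < m := by omega
    set i : Fin n := G ⟨n - 2, hn2m⟩ with hidef
    set w : Fin n := G ⟨n - 1, hn1m⟩ with hwdef
    have hiw : i ≠ w := by
      intro h
      have h2 := hinj ⟨n - 2, hn2m⟩ ⟨n - 1, hn1m⟩ (by show n - 2 < n; omega)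
        (by show n - 1 < n; omega) h
      rw [Fin.mk.injEq] at h2
      omega
    by_cases hc2 : ∀ j : Fin m, G j = i → j = ⟨n - 2, hn2m⟩
    · -- Case 2a: player `i` only receives the item `n-2`
      have h0 := happ (fun _ => stepVal m (n-2) (m:ℝ) 1)
        (fun _ => stepVal_nonneg m (n-2) (m:ℝ) 1 (by positivity) one_pos.le)
        (fun _ => 1)
        (fun _ => stepVal_consistent m (n-2) (m:ℝ) 1 (by exact_mod_cast Nat.one_le_cast.mpr (by omega))) i
      have hbun : obundleOf (pickMech seq fun _ => 1) i = {(⟨n - 2, hn2m⟩ : Fin m)} := by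
        ext j
        simp only [obundleOf, Finset.mem_filter, Finset.mem_univ, true_and,
          Finset.mem_singleton]
        constructor
        · intro hj
          rw [hid j] at hj
          exact hc2 j (Option.some_injective _ hj)
        · rintro rfl
          rw [hid, ← hidef]
      have hval : bundleVal (stepVal m (n-2) (m:ℝ) 1)
          (obundleOf (pickMech seq fun _ => 1) i) = 1 := by
        rw [hbun]
        show (∑ j ∈ {(⟨n - 2, hn2m⟩ : Fin m)}, stepVal m (n-2) (m:ℝ) 1 j) = 1
        rw [Finset.sum_singleton]
        show (if n - 2 < n - 2 then ((m:ℕ):ℝ) else 1) = 1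
        rw [if_neg (lt_irrefl _)]
      have hmms : ((d:ℕ):ℝ) ≤ mms n (stepVal m (n-2) (m:ℝ) 1) := by
        rw [hddef]; exact attack2 hn hm
      rw [hval] at h0
      have hmul : ρ * (d:ℝ) ≤ ρ * mms n (stepVal m (n-2) (m:ℝ) 1) :=
        mul_le_mul_of_nonneg_left hmms hρ0.le
      linarith
    · -- Case 2b: player `i` picks a second time; the mechanism is manipulable
      push_neg at hc2
      obtain ⟨j0, hj0i, hj0ne⟩ := hc2
      have hUne : (Finset.univ.filter fun j : Fin m =>
          G j = i ∧ j ≠ ⟨n - 2, hn2m⟩).Nonempty :=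
        ⟨j0, Finset.mem_filter.mpr ⟨Finset.mem_univ _, hj0i, hj0ne⟩⟩
      set u : Fin m := Finset.min' _ hUne with hudef
      have humem := Finset.min'_mem _ hUne
      rw [Finset.mem_filter] at humem
      have hui : G u = i := humem.2.1
      have hun : n ≤ u.val := by
        rcases Nat.lt_or_ge u.val n with h | h
        · exfalso
          apply humem.2.2
          exact hinj u ⟨n - 2, hn2m⟩ h (by show n - 2 < n; omega) hui
        · exact h
      have hum := u.isLt
      have humin : ∀ p : Fin m, G p = i → p = ⟨n - 2, hn2m⟩ ∨ u ≤ p := by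
        intro p hp
        by_cases hpe : p = ⟨n - 2, hn2m⟩
        · exact Or.inl hpe
        · exact Or.inr (Finset.min'_le _ _
            (Finset.mem_filter.mpr ⟨Finset.mem_univ _, hp, hpe⟩))
      -- the special items
      set z0 : Fin m := ⟨0, by omega⟩ with hz0def
      set z1 : Fin m := ⟨1, by omega⟩ with hz1def
      have hz0v : z0.val = 0 := by rw [hz0def]
      have hz1v : z1.val = 1 := by rw [hz1def]
      have hz01 : z0 ≠ z1 := by
        intro h
        rw [Fin.ext_iff, hz0v, hz1v] at h
        omega
      -- the ranking profile
      set R : Fin n → Equiv.Perm (Fin m) :=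
        fun p => if p = i then 1 else if p = w then wPerm m else oPerm m with hRdef
      have hRi : R i = 1 := by rw [hRdef]; simp
      have hRw : R w = wPerm m := by
        rw [hRdef]
        show (if w = i then (1 : Equiv.Perm (Fin m)) else if w = w then wPerm m else oPerm m)
          = wPerm m
        rw [if_neg (fun h => hiw h.symm), if_pos rfl]
      have hRo : ∀ p : Fin n, p ≠ i → p ≠ w → R p = oPerm m := by
        intro p h1 h2
        rw [hRdef]
        show (if p = i then (1 : Equiv.Perm (Fin m)) else if p = w then wPerm m else oPerm m)
          = oPerm m
        rw [if_neg h1, if_neg h2]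
      set v : Fin m → ℝ := stepVal m 2 1 0 with hvdef
      have hvnn : ∀ j, 0 ≤ v j := by
        rw [hvdef]; exact stepVal_nonneg m 2 1 0 one_pos.le le_rfl
      have hvcons : Consistent v (R i) := by
        rw [hvdef, hRi]; exact stepVal_consistent m 2 1 0 (by norm_num)
      have key := htru R i v hvnn hvcons (Equiv.swap z0 z1)
      set R' : Fin n → Equiv.Perm (Fin m) := Function.update R i (Equiv.swap z0 z1) with hR'def
      have hR'i : R' i = Equiv.swap z0 z1 := by
        rw [hR'def]; exact Function.update_self _ _ _
      have hR'p : ∀ p, p ≠ i → R' p = R p := by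
        intro p hp
        rw [hR'def]; exact Function.update_of_ne hp _ _
      -- the pickers during the first `n-2` turns are neither `i` nor `w`
      have htakene : ∀ p ∈ seq.take (n-2), p ≠ i ∧ p ≠ w := by
        intro p hp
        rw [List.mem_iff_getElem] at hp
        obtain ⟨idx, hidx, hpe⟩ := hp
        rw [List.length_take] at hidx
        have hidx2 : idx < n - 2 := by omega
        have hidxm : idx < m := by omega
        have hpG : p = G ⟨idx, hidxm⟩ := by
          rw [hG, ← hpe]
          exact List.getElem_take
        constructor
        · intro h
          have h2 := hinj ⟨idx, hidxm⟩ ⟨n - 2, hn2m⟩ (by show idx < n; omega)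
            (by show n - 2 < n; omega) (by rw [← hpG]; exact h)
          rw [Fin.mk.injEq] at h2
          omega
        · intro h
          have h2 := hinj ⟨idx, hidxm⟩ ⟨n - 1, hn1m⟩ (by show idx < n; omega)
            (by show n - 1 < n; omega) (by rw [← hpG]; exact h)
          rw [Fin.mk.injEq] at h2
          omega
      have hP2card : ({z0, z1} : Finset (Fin m)).card = 2 := Finset.card_pair hz01
      have hz1P : z1 ∈ ({z0, z1} : Finset (Fin m)) := by
        rw [Finset.mem_insert, Finset.mem_singleton]; right; rfl
      have hz0P : z0 ∈ ({z0, z1} : Finset (Fin m)) := Finset.mem_insert_self _ _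
      -- common hypotheses for the prefix cores
      have hcardhyp : (seq.take (n-2)).length + ({z0, z1} : Finset (Fin m)).card ≤
          (Finset.univ : Finset (Fin m)).card := by
        rw [List.length_take, hP2card, Finset.card_univ, Fintype.card_fin]
        omega
      have hdrop2 : seq.drop (n-2) = i :: seq.drop (n-1) := by
        rw [List.drop_eq_getElem_cons (by omega : n - 2 < seq.length)]
        congr 1
        · exact (hG ⟨n - 2, hn2m⟩).symm.trans hidef.symm
        · congr 1
          omega
      have hdrop1 : seq.drop (n-1) = w :: seq.drop n := by
        rw [List.drop_eq_getElem_cons (by omega : n - 1 < seq.length)]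
        congr 1
        · exact (hG ⟨n - 1, hn1m⟩).symm.trans hwdef.symm
        · congr 1
          omega
      -- truthful run
      obtain ⟨S1, hS1s, hS1P, hS1c, hS1a⟩ :=
        pickAllocList_core R {z0, z1} (seq.take (n-2)) Finset.univ (seq.drop (n-2))
          (Finset.subset_univ _) hcardhyp
          (by intro p hp T hTs hPT hPc hT
              obtain ⟨hpi, hpw⟩ := htakene p hp
              rw [hRo p hpi hpw]
              exact best_o_ne2 hz0v hz1v (hPT hz0P) (hPT hz1P) (by omega))
      have h0S1 : z0 ∈ S1 := hS1P hz0P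
      have h1S1 : z1 ∈ S1 := hS1P hz1P
      have hS1ne : S1.Nonempty := ⟨z0, h0S1⟩
      have h1e : z1 ∈ S1.erase z0 := Finset.mem_erase.mpr ⟨Ne.symm hz01, h1S1⟩
      have hS1ene : (S1.erase z0).Nonempty := ⟨z1, h1e⟩
      have hT0 : pickMech seq R z0 = some i := by
        have e1 := hS1a z0 hz0P
        rw [List.take_append_drop] at e1
        rw [show pickMech seq R z0 = pickAllocList R seq Finset.univ z0 from rfl, e1,
          hdrop2, pickAllocList, dif_pos hS1ne, hRi,
          best_id hz0v h0S1, Function.update_self]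
      have hT1 : pickMech seq R z1 = some w := by
        have e1 := hS1a z1 hz1P
        rw [List.take_append_drop] at e1
        rw [show pickMech seq R z1 = pickAllocList R seq Finset.univ z1 from rfl, e1,
          hdrop2, pickAllocList, dif_pos hS1ne, hRi,
          best_id hz0v h0S1, Function.update_of_ne (Ne.symm hz01)]
        rw [hdrop1, pickAllocList, dif_pos hS1ene, hRw,
          best_w_top hz1v h1e, Function.update_self]
      -- deviating run
      obtain ⟨T1, hT1s, hT1P, hT1c, hT1a⟩ :=
        pickAllocList_core R' {z0, z1} (seq.take (n-2)) Finset.univ (seq.drop (n-2))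
          (Finset.subset_univ _) hcardhyp
          (by intro p hp T hTs hPT hPc hT
              obtain ⟨hpi, hpw⟩ := htakene p hp
              rw [hR'p p hpi, hRo p hpi hpw]
              exact best_o_ne2 hz0v hz1v (hPT hz0P) (hPT hz1P) (by omega))
      have h0T1 : z0 ∈ T1 := hT1P hz0P
      have h1T1 : z1 ∈ T1 := hT1P hz1P
      have hT1ne : T1.Nonempty := ⟨z1, h1T1⟩
      have hT1card : T1.card = m - (n - 2) := by
        rw [List.length_take, Finset.card_univ, Fintype.card_fin] at hT1c
        omega
      have hD1 : pickMech seq R' z1 = some i := by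
        have e1 := hT1a z1 hz1P
        rw [List.take_append_drop] at e1
        rw [show pickMech seq R' z1 = pickAllocList R' seq Finset.univ z1 from rfl, e1,
          hdrop2, pickAllocList, dif_pos hT1ne, hR'i,
          best_swap_top hz0v h1T1, Function.update_self]
      have hD0 : pickMech seq R' z0 = some i := by
        have e1 := hT1a z0 hz0P
        rw [List.take_append_drop] at e1
        rw [show pickMech seq R' z0 = pickAllocList R' seq Finset.univ z0 from rfl, e1,
          hdrop2, pickAllocList, dif_pos hT1ne, hR'i,
          best_swap_top hz0v h1T1, Function.update_of_ne hz01]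
        -- now run through the middle section
        have hmidsplit : (seq.drop (n-1)).take (u.val - (n-1)) ++ seq.drop u.val
            = seq.drop (n-1) := by
          have h := List.take_append_drop (u.val - (n-1)) (seq.drop (n-1))
          rwa [List.drop_drop, (by omega : n - 1 + (u.val - (n-1)) = u.val)] at h
        have hmidne : ∀ p ∈ (seq.drop (n-1)).take (u.val - (n-1)), p ≠ i := by
          intro p hp
          rw [List.mem_iff_getElem] at hp
          obtain ⟨idx, hidx, hpe⟩ := hp
          rw [List.length_take, List.length_drop] at hidx
          have hidx2 : idx < u.val - (n-1) := by omega
          have hklt : n - 1 + idx < m := by omega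
          have hpG : p = G ⟨n - 1 + idx, hklt⟩ := by
            rw [hG, ← hpe, List.getElem_take, List.getElem_drop]
          intro hpi
          rcases humin ⟨n - 1 + idx, hklt⟩ (by rw [← hpG]; exact hpi) with h | h
          · rw [Fin.mk.injEq] at h
            omega
          · have h2 : u.val ≤ n - 1 + idx := h
            omega
        have h0e : z0 ∈ T1.erase z1 := Finset.mem_erase.mpr ⟨hz01, h0T1⟩
        obtain ⟨T2, hT2s, hT2P, hT2c, hT2a⟩ :=
          pickAllocList_core R' {z0} ((seq.drop (n-1)).take (u.val - (n-1)))
            (T1.erase z1) (seq.drop u.val)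
            (Finset.singleton_subset_iff.mpr h0e)
            (by rw [List.length_take, List.length_drop, Finset.card_singleton,
                  Finset.card_erase_of_mem h1T1, hT1card]
                omega)
            (by intro p hp T hTs hPT hPc hT
                have hpi := hmidne p hp
                have h0T : z0 ∈ T := hPT (Finset.mem_singleton_self _)
                have h1T : z1 ∉ T := fun hmem => (Finset.notMem_erase z1 T1) (hTs hmem)
                have hc2' : 2 ≤ T.card := by
                  rw [Finset.card_singleton] at hPc
                  omega
                rw [Finset.mem_singleton]
                by_cases hpw : p = w
                · rw [hR'p p hpi, hpw, hRw]
                  exact best_w_ne hz0v hz1v h0T h1T hc2'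
                · rw [hR'p p hpi, hRo p hpi hpw]
                  exact best_o_ne1 hz0v hz1v h0T h1T hc2')
        have h0T2 : z0 ∈ T2 := hT2P (Finset.mem_singleton_self _)
        have hT2ne : T2.Nonempty := ⟨z0, h0T2⟩
        have h1T2 : z1 ∉ T2 := fun hmem => (Finset.notMem_erase z1 T1) (hT2s hmem)
        have e2 := hT2a z0 (Finset.mem_singleton_self _)
        rw [hmidsplit] at e2
        rw [e2]
        have hdropu : seq.drop u.val = i :: seq.drop (u.val + 1) := by
          rw [List.drop_eq_getElem_cons (by omega : u.val < seq.length)]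
          congr 1
          exact (hG u).symm.trans hui
        rw [hdropu, pickAllocList, dif_pos hT2ne, hR'i,
          best_swap_second hz0v hz1v h0T2 h1T2, Function.update_self]
      -- put things together
      have hBT : bundleVal v (obundleOf (pickMech seq R) i) = 1 := by
        have hmem : z0 ∈ obundleOf (pickMech seq R) i := by
          simp only [obundleOf, Finset.mem_filter, Finset.mem_univ, true_and]
          exact hT0
        have hz : ∀ b ∈ obundleOf (pickMech seq R) i, b ≠ z0 → v b = 0 := by
          intro b hb hbne
          simp only [obundleOf, Finset.mem_filter, Finset.mem_univ, true_and] at hb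
          rcases Nat.lt_or_ge b.val 2 with hlt | hge
          · exfalso
            have hb01 : b.val = 0 ∨ b.val = 1 := by omega
            rcases hb01 with h | h
            · exact hbne (Fin.ext (by rw [h, hz0v]))
            · have hbz1 : b = z1 := Fin.ext (by rw [h, hz1v])
              rw [hbz1, hT1] at hb
              exact hiw (Option.some_injective _ hb).symm
          · rw [hvdef]
            show (if b.val < 2 then (1:ℝ) else 0) = 0
            rw [if_neg (by omega)]
        have hsum := Finset.sum_eq_single_of_mem z0 hmem hz
        rw [show bundleVal v (obundleOf (pickMech seq R) i)
            = ∑ j ∈ obundleOf (pickMech seq R) i, v j from rfl, hsum, hvdef]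
        show (if z0.val < 2 then (1:ℝ) else 0) = 1
        rw [if_pos (by omega)]
      have hBD : (2:ℝ) ≤ bundleVal v (obundleOf (pickMech seq R') i) := by
        have hsub : ({z0, z1} : Finset (Fin m)) ⊆ obundleOf (pickMech seq R') i := by
          intro x hx
          simp only [obundleOf, Finset.mem_filter, Finset.mem_univ, true_and]
          rcases Finset.mem_insert.mp hx with rfl | hx
          · exact hD0
          · rw [Finset.mem_singleton] at hx
            subst hx
            exact hD1
        have hpair : (∑ j ∈ ({z0, z1} : Finset (Fin m)), v j) = 2 := by
          rw [Finset.sum_pair hz01, hvdef]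
          show (if z0.val < 2 then (1:ℝ) else 0) + (if z1.val < 2 then (1:ℝ) else 0) = 2
          rw [if_pos (by omega), if_pos (by omega)]
          norm_num
        calc (2:ℝ) = ∑ j ∈ ({z0, z1} : Finset (Fin m)), v j := hpair.symm
          _ ≤ ∑ j ∈ obundleOf (pickMech seq R') i, v j :=
              Finset.sum_le_sum_of_subset_of_nonneg hsub (fun j _ _ => hvnn j)
          _ = bundleVal v (obundleOf (pickMech seq R') i) := rfl
      rw [hBT] at key
      linarith
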